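/- arXiv:2102.01036 — 7 statements merged into one kernel-verified Lean document; each statement's English description precedes it below -/
import Mathlib

section
/- Let n ≥ 3 be an integer and let q be a real number with 4q > n − 1. Then there exists a constant C > 0 such that for every L ≥ 1, ∫₀^∞ e^{nL} ((cosh L + e^L ρ²/2)² − 1)^{−q} ρ^{n−2} dρ ≤ C e^{L(n−2q)}. In particular, for 2q > n this bound tends to 0 as L → ∞. -/
/-!
Write `A = cosh L + e^L ρ² / 2`. Since `cosh L ≥ e^L / 2`, we have `A ≥ e^L (1 + ρ²) / 2 ≥ e / 2`
for `L ≥ 1`, hence `A² - 1 ≥ A² / 3 ≥ e^{2L} (1 + ρ)⁴ / 48`. The integrand is therefore at most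
`48^q e^{L(n - 2q)} (1 + ρ)^{n - 2 - 4q}`, and `∫₀^∞ (1 + ρ)^p dρ = -1 / (p + 1)` for `p < -1`.
-/

open MeasureTheory Real Filter Set

lemma integrableOn_Ioi_one_add_rpow {p : ℝ} (hp : p < -1) :
    IntegrableOn (fun ρ : ℝ => (1 + ρ) ^ p) (Ioi 0) := by
  have := integrableOn_Ioi_rpow_of_lt hp one_pos
  rwa [← add_zero (1 : ℝ), ← image_const_add_Ioi,
    (measurePreserving_add_left volume (1 : ℝ)).integrableOn_image
      (measurableEmbedding_addLeft 1)] at this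

lemma integral_Ioi_one_add_rpow {p : ℝ} (hp : p < -1) :
    ∫ ρ in Ioi (0 : ℝ), (1 + ρ) ^ p = -1 / (p + 1) := by
  have := integral_Ioi_rpow_of_lt hp one_pos
  rw [one_rpow, ← add_zero (1 : ℝ), ← image_const_add_Ioi,
    (measurePreserving_add_left volume (1 : ℝ)).setIntegral_image_emb
      (measurableEmbedding_addLeft 1)] at this
  simpa only [add_zero] using this

noncomputable def hyperboloidalRadiusSq (L ρ : ℝ) : ℝ :=
  (cosh L + exp L * ρ ^ 2 / 2) ^ 2 - 1

lemma exp_div_two_mul_one_add_sq_le (L ρ : ℝ) :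
    exp L / 2 * (1 + ρ ^ 2) ≤ cosh L + exp L * ρ ^ 2 / 2 := by
  have : exp L / 2 ≤ cosh L := by
    rw [cosh_eq]
    linarith [exp_pos (-L)]
  linarith

lemma le_hyperboloidalRadiusSq {L : ℝ} (hL : 1 ≤ L) (ρ : ℝ) :
    exp (2 * L) * (1 + ρ) ^ 4 / 48 ≤ hyperboloidalRadiusSq L ρ := by
  set B := exp L / 2 * (1 + ρ ^ 2) with hBdef
  have hBA : B ≤ cosh L + exp L * ρ ^ 2 / 2 := exp_div_two_mul_one_add_sq_le L ρ
  have hB : 1.35 ≤ B := by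
    have : exp 1 / 2 * 1 ≤ B :=
      mul_le_mul (by linarith [exp_le_exp.2 hL]) (by nlinarith [sq_nonneg ρ]) zero_le_one
        (by positivity)
    linarith [exp_one_gt_d9]
  have hB2 : exp (2 * L) * (1 + ρ) ^ 4 / 16 ≤ B ^ 2 := by
    have h4 : (1 + ρ) ^ 4 ≤ 4 * (1 + ρ ^ 2) ^ 2 := by
      have hsq : (1 + ρ) ^ 2 ≤ 2 * (1 + ρ ^ 2) := by nlinarith [sq_nonneg (1 - ρ)]
      have := pow_le_pow_left₀ (sq_nonneg _) hsq 2
      linarith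
    calc exp (2 * L) * (1 + ρ) ^ 4 / 16 ≤ exp (2 * L) * (4 * (1 + ρ ^ 2) ^ 2) / 16 := by gcongr
      _ = B ^ 2 := by rw [hBdef, mul_comm 2 L, exp_mul, rpow_two]; ring
  have : B ^ 2 ≤ (cosh L + exp L * ρ ^ 2 / 2) ^ 2 :=
    pow_le_pow_left₀ (by linarith) hBA 2
  unfold hyperboloidalRadiusSq
  nlinarith

lemma hyperboloidalRadiusSq_rpow_neg_le {L : ℝ} (hL : 1 ≤ L) {ρ : ℝ} (hρ : 0 ≤ ρ) {q : ℝ}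
    (hq : 0 ≤ q) :
    hyperboloidalRadiusSq L ρ ^ (-q) ≤ 48 ^ q * exp (-(2 * q * L)) * (1 + ρ) ^ (-(4 * q)) := by
  have hpos : 0 < exp (2 * L) * (1 + ρ) ^ 4 / 48 := by positivity
  calc hyperboloidalRadiusSq L ρ ^ (-q)
      ≤ (exp (2 * L) * (1 + ρ) ^ 4 / 48) ^ (-q) :=
        rpow_le_rpow_of_nonpos hpos (le_hyperboloidalRadiusSq hL ρ) (neg_nonpos.2 hq)
    _ = 48 ^ q * exp (-(2 * q * L)) * (1 + ρ) ^ (-(4 * q)) := by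
        rw [div_rpow (by positivity) (by norm_num), mul_rpow (by positivity) (by positivity),
          ← exp_mul, ← rpow_natCast, ← rpow_mul (by linarith), rpow_neg (by norm_num : (0:ℝ) ≤ 48)]
        push_cast
        field_simp

lemma hyperboloidalRadiusSq_pos {L : ℝ} (hL : L ≠ 0) (ρ : ℝ) : 0 < hyperboloidalRadiusSq L ρ := by
  have : 1 < cosh L + exp L * ρ ^ 2 / 2 := by
    have := mul_nonneg (exp_pos L).le (sq_nonneg ρ)
    linarith [one_lt_cosh.2 hL]
  unfold hyperboloidalRadiusSq
  nlinarith

lemma setIntegral_exp_mul_hyperboloidalRadiusSq_rpow_neg_mul_pow_le (a : ℝ) (k : ℕ) {q : ℝ}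
    (hq : (k : ℝ) + 1 < 4 * q) {L : ℝ} (hL : 1 ≤ L) :
    ∫ ρ in Ioi (0 : ℝ), exp (a * L) * hyperboloidalRadiusSq L ρ ^ (-q) * ρ ^ k ≤
      48 ^ q / (4 * q - k - 1) * exp (L * (a - 2 * q)) := by
  have hq0 : 0 ≤ q := by linarith [k.cast_nonneg (α := ℝ)]
  have hp : (k : ℝ) - 4 * q < -1 := by linarith
  have hbound : ∀ ρ ∈ Ioi (0 : ℝ), exp (a * L) * hyperboloidalRadiusSq L ρ ^ (-q) * ρ ^ k ≤
      48 ^ q * exp (L * (a - 2 * q)) * (1 + ρ) ^ ((k : ℝ) - 4 * q) := by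
    intro ρ hρ
    have hρ : 0 ≤ ρ := le_of_lt hρ
    calc exp (a * L) * hyperboloidalRadiusSq L ρ ^ (-q) * ρ ^ k
        ≤ exp (a * L) * (48 ^ q * exp (-(2 * q * L)) * (1 + ρ) ^ (-(4 * q))) * (1 + ρ) ^ k := by
          gcongr
          · exact hyperboloidalRadiusSq_rpow_neg_le hL hρ hq0
          · linarith
      _ = 48 ^ q * exp (L * (a - 2 * q)) * (1 + ρ) ^ ((k : ℝ) - 4 * q) := by
          rw [sub_eq_neg_add _ (4 * q), rpow_add (by linarith), rpow_natCast,
            show L * (a - 2 * q) = a * L + -(2 * q * L) by ring, exp_add]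
          ring
  calc ∫ ρ in Ioi (0 : ℝ), exp (a * L) * hyperboloidalRadiusSq L ρ ^ (-q) * ρ ^ k
      ≤ ∫ ρ in Ioi (0 : ℝ), 48 ^ q * exp (L * (a - 2 * q)) * (1 + ρ) ^ ((k : ℝ) - 4 * q) := by
        refine integral_mono_of_nonneg ?_ ((integrableOn_Ioi_one_add_rpow hp).const_mul _) ?_
        · filter_upwards [ae_restrict_mem measurableSet_Ioi] with ρ hρ
          have := hyperboloidalRadiusSq_pos (by linarith : L ≠ 0) ρ
          have : (0 : ℝ) < ρ := hρ
          positivity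
        · exact (ae_restrict_mem measurableSet_Ioi).mono hbound
    _ = 48 ^ q / (4 * q - k - 1) * exp (L * (a - 2 * q)) := by
        rw [integral_const_mul, integral_Ioi_one_add_rpow hp,
          show 4 * q - k - 1 = -((k : ℝ) - 4 * q + 1) by ring, div_neg, neg_div]
        ring

/-- Top-face estimate `F₊,L`: for `n ≥ 3` and `4q > n − 1`, there is `C > 0` with
`∫₀^∞ e^{nL} ((cosh L + e^L ρ²/2)² − 1)^{−q} ρ^{n−2} dρ ≤ C e^{L(n−2q)}` for all `L ≥ 1`;
and for `2q > n` this bound tends to `0` as `L → ∞`. -/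
theorem stmt_0 (n : ℕ) (hn : 3 ≤ n) (q : ℝ) (hq : 4 * q > (n : ℝ) - 1) :
    (∃ C : ℝ, 0 < C ∧ ∀ L : ℝ, 1 ≤ L →
      (∫ ρ in Set.Ioi (0 : ℝ),
          Real.exp ((n : ℝ) * L) *
            ((Real.cosh L + Real.exp L * ρ ^ 2 / 2) ^ 2 - 1) ^ (-q) * ρ ^ (n - 2))
        ≤ C * Real.exp (L * ((n : ℝ) - 2 * q))) ∧
    (2 * q > (n : ℝ) → ∀ C : ℝ,
      Tendsto (fun L : ℝ => C * Real.exp (L * ((n : ℝ) - 2 * q))) atTop (nhds 0)) := by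
  have hq' : ((n - 2 : ℕ) : ℝ) + 1 < 4 * q := by
    rw [Nat.cast_sub (by omega)]
    push_cast
    linarith
  refine ⟨⟨48 ^ q / (4 * q - (n - 2 : ℕ) - 1), div_pos (by positivity) (by linarith),
    fun L hL => setIntegral_exp_mul_hyperboloidalRadiusSq_rpow_neg_mul_pow_le n (n - 2) hq' hL⟩,
    fun h2q C => ?_⟩
  have : Tendsto (fun L : ℝ => L * ((n : ℝ) - 2 * q)) atTop atBot :=
    tendsto_id.atTop_mul_const_of_neg (by linarith)
  simpa using (tendsto_exp_atBot.comp this).const_mul C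
end

section
/- Let n ≥ 3 be an integer and let q be a real number with 2q > n − 1. Then there exists a constant C > 0 such that for every L ≥ 1, ∫₀^∞ e^{−nL} ((cosh L + e^{−L} ρ²/2)² − 1)^{−q/2} ρ^{n−2} dρ ≤ C e^{−L(1+q)}. In particular this bound tends to 0 as L → ∞. -/
/-!
For `L ≥ log 2` one has `(cosh L + e^{-L} ρ²/2)² - 1 ≥ (e^{2L}/8) (1 + t²)²` with `t = e^{-L} ρ`,
so after the substitution `ρ = e^L t` the integral is at most
`8^{q/2} e^{-L(1+q)} ∫₀^∞ (1 + t²)^{-q} t^{n-2} dt`, and the last integral converges because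
`t^{n-2} ≤ (1 + t²)^{(n-2)/2}` and `2q - (n - 2) > 1`.
-/

open MeasureTheory Real Filter Set

lemma integrableOn_Ioi_one_add_sq_rpow_neg_mul_pow {k : ℕ} {q : ℝ} (hq : k + 1 < 2 * q) :
    IntegrableOn (fun t : ℝ => (1 + t ^ 2) ^ (-q) * t ^ k) (Ioi 0) := by
  have hmaj : Integrable (fun t : ℝ => (1 + ‖t‖ ^ 2) ^ (-(2 * q - k) / 2)) :=
    integrable_rpow_neg_one_add_norm_sq (by simp; linarith)
  refine hmaj.integrableOn.mono' (by fun_prop : Measurable _).aestronglyMeasurable ?_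
  filter_upwards [ae_restrict_mem measurableSet_Ioi] with t (ht : 0 < t)
  have htk : t ^ k ≤ (1 + t ^ 2) ^ ((k : ℝ) / 2) :=
    calc t ^ k = (t ^ 2) ^ ((k : ℝ) / 2) := by
          rw [← rpow_natCast, ← rpow_natCast, ← rpow_mul ht.le]; ring_nf
      _ ≤ (1 + t ^ 2) ^ ((k : ℝ) / 2) := by gcongr; linarith
  rw [norm_of_nonneg (by positivity), norm_of_nonneg ht.le,
    show -(2 * q - k) / 2 = -q + k / 2 by ring, rpow_add (by positivity)]
  gcongr

lemma exp_two_mul_div_eight_mul_le_cosh_add_sq_sub_one {L : ℝ} (hL : log 2 ≤ L) (ρ : ℝ) :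
    exp (2 * L) / 8 * (1 + (exp (-L) * ρ) ^ 2) ^ 2 ≤ (cosh L + exp (-L) * ρ ^ 2 / 2) ^ 2 - 1 := by
  have hu : 2 ≤ exp L := by simpa [exp_log two_pos] using exp_le_exp.mpr hL
  have huv : exp L * exp (-L) = 1 := by rw [← exp_add, add_neg_cancel, exp_zero]
  rw [cosh_eq, show 2 * L = L + L by ring, exp_add]
  set u := exp L
  set v := exp (-L)
  have hlhs : u * u / 8 * (1 + (v * ρ) ^ 2) ^ 2 = (u + v * ρ ^ 2) ^ 2 / 8 := by
    linear_combination (2 * u * v * ρ ^ 2 + v ^ 2 * ρ ^ 4 * (u * v + 1)) / 8 * huv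
  rw [hlhs]
  -- `(u + v + s)² / 4 - 1 ≥ (u + s)² / 4 + u v / 2 - 1 ≥ (u + s)² / 8` with `s = v ρ²`, as `u ≥ 2`
  nlinarith [exp_pos (-L), mul_nonneg (exp_pos (-L)).le (sq_nonneg ρ)]

noncomputable def bottomFaceIntegrand (n : ℕ) (q L ρ : ℝ) : ℝ :=
  exp (-(n * L)) * ((cosh L + exp (-L) * ρ ^ 2 / 2) ^ 2 - 1) ^ (-q / 2) * ρ ^ (n - 2)

lemma bottomFaceIntegrand_nonneg (n : ℕ) {q L ρ : ℝ} (hL : log 2 ≤ L) (hρ : 0 ≤ ρ) :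
    0 ≤ bottomFaceIntegrand n q L ρ := by
  have hbase : 0 ≤ (cosh L + exp (-L) * ρ ^ 2 / 2) ^ 2 - 1 :=
    le_trans (by positivity) (exp_two_mul_div_eight_mul_le_cosh_add_sq_sub_one hL ρ)
  unfold bottomFaceIntegrand
  positivity

lemma bottomFaceIntegrand_le {n : ℕ} (hn : 2 ≤ n) {q : ℝ} (hq : 0 ≤ q) {L : ℝ} (hL : log 2 ≤ L)
    {ρ : ℝ} (hρ : 0 ≤ ρ) :
    bottomFaceIntegrand n q L ρ ≤
      8 ^ (q / 2) * exp (-(L * (2 + q))) *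
        ((1 + (exp (-L) * ρ) ^ 2) ^ (-q) * (exp (-L) * ρ) ^ (n - 2)) := by
  set t := exp (-L) * ρ with ht
  have hbase : (cosh L + exp (-L) * ρ ^ 2 / 2) ^ 2 - 1 ≥ exp (2 * L) / 8 * (1 + t ^ 2) ^ 2 :=
    exp_two_mul_div_eight_mul_le_cosh_add_sq_sub_one hL ρ
  have hrpow : ((cosh L + exp (-L) * ρ ^ 2 / 2) ^ 2 - 1) ^ (-q / 2) ≤
      8 ^ (q / 2) * exp (-(q * L)) * (1 + t ^ 2) ^ (-q) := by
    refine (rpow_le_rpow_of_nonpos (by positivity) hbase (by linarith)).trans_eq ?_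
    rw [mul_rpow (by positivity) (by positivity), div_rpow (by positivity) (by positivity),
      ← exp_mul, ← rpow_natCast_mul (by positivity), neg_div, rpow_neg (by norm_num)]
    field_simp
    ring_nf
  have hρpow : ρ ^ (n - 2) = exp ((n - 2 : ℕ) * L) * t ^ (n - 2) := by
    rw [exp_nat_mul, ← mul_pow, ht, ← mul_assoc, ← exp_add, add_neg_cancel, exp_zero, one_mul]
  have hexp : exp (-(n * L)) * exp (-(q * L)) * exp ((n - 2 : ℕ) * L) = exp (-(L * (2 + q))) := by
    rw [← exp_add, ← exp_add, Nat.cast_sub hn]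
    push_cast
    ring_nf
  calc bottomFaceIntegrand n q L ρ
      ≤ exp (-(n * L)) * (8 ^ (q / 2) * exp (-(q * L)) * (1 + t ^ 2) ^ (-q)) * ρ ^ (n - 2) := by
        unfold bottomFaceIntegrand
        gcongr
    _ = _ := by rw [hρpow, ← hexp]; ring

lemma integral_bottomFaceIntegrand_le {n : ℕ} (hn : 2 ≤ n) {q : ℝ} (hq : (n : ℝ) - 1 < 2 * q)
    {L : ℝ} (hL : log 2 ≤ L) :
    ∫ ρ in Ioi 0, bottomFaceIntegrand n q L ρ ≤
      8 ^ (q / 2) * (∫ t in Ioi 0, (1 + t ^ 2) ^ (-q) * t ^ (n - 2)) * exp (-(L * (1 + q))) := by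
  set G : ℝ → ℝ := fun t => (1 + t ^ 2) ^ (-q) * t ^ (n - 2)
  have hG : IntegrableOn G (Ioi 0) :=
    integrableOn_Ioi_one_add_sq_rpow_neg_mul_pow (by rw [Nat.cast_sub hn]; push_cast; linarith)
  have hGL : IntegrableOn (fun ρ => G (exp (-L) * ρ)) (Ioi 0) :=
    (integrableOn_Ioi_comp_mul_left_iff G 0 (exp_pos _)).mpr (by simpa using hG)
  have hq0 : 0 ≤ q := by
    have : (2 : ℝ) ≤ n := by exact_mod_cast hn
    linarith
  calc ∫ ρ in Ioi 0, bottomFaceIntegrand n q L ρ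
      ≤ ∫ ρ in Ioi 0, 8 ^ (q / 2) * exp (-(L * (2 + q))) * G (exp (-L) * ρ) := by
        refine integral_mono_of_nonneg ?_ (hGL.const_mul _) ?_ <;>
          filter_upwards [ae_restrict_mem measurableSet_Ioi] with ρ (hρ : 0 < ρ)
        · exact bottomFaceIntegrand_nonneg n hL hρ.le
        · exact bottomFaceIntegrand_le hn hq0 hL hρ.le
    _ = 8 ^ (q / 2) * exp (-(L * (2 + q))) * (exp L * ∫ t in Ioi 0, G t) := by
        rw [integral_const_mul, integral_comp_mul_left_Ioi G 0 (exp_pos _), mul_zero, smul_eq_mul,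
          ← exp_neg, neg_neg]
    _ = _ := by
        rw [show exp (-(L * (1 + q))) = exp (-(L * (2 + q))) * exp L by rw [← exp_add]; ring_nf]
        ring

/-- Bottom-face estimate `F₋,L`: for `n ≥ 3` and `2q > n − 1`, there is `C > 0` with
`∫₀^∞ e^{−nL} ((cosh L + e^{−L} ρ²/2)² − 1)^{−q/2} ρ^{n−2} dρ ≤ C e^{−L(1+q)}` for all
`L ≥ 1`; and this bound tends to `0` as `L → ∞`. -/
theorem stmt_1 (n : ℕ) (hn : 3 ≤ n) (q : ℝ) (hq : 2 * q > (n : ℝ) - 1) :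
    (∃ C : ℝ, 0 < C ∧ ∀ L : ℝ, 1 ≤ L →
      (∫ ρ in Set.Ioi (0 : ℝ),
          Real.exp (-((n : ℝ) * L)) *
            ((Real.cosh L + Real.exp (-L) * ρ ^ 2 / 2) ^ 2 - 1) ^ (-q / 2) * ρ ^ (n - 2))
        ≤ C * Real.exp (-(L * (1 + q)))) ∧
    (∀ C : ℝ,
      Tendsto (fun L : ℝ => C * Real.exp (-(L * (1 + q)))) atTop (nhds 0)) := by
  set I : ℝ := ∫ t in Ioi 0, (1 + t ^ 2) ^ (-q) * t ^ (n - 2)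
  have hI : 0 ≤ I := setIntegral_nonneg measurableSet_Ioi fun t (ht : 0 < t) => by positivity
  refine ⟨⟨8 ^ (q / 2) * I + 1, by positivity, fun L hL => ?_⟩, fun C => ?_⟩
  · have hL2 : log 2 ≤ L := by linarith [log_two_lt_d9]
    calc _ ≤ 8 ^ (q / 2) * I * exp (-(L * (1 + q))) :=
          integral_bottomFaceIntegrand_le (by omega) hq hL2
      _ ≤ (8 ^ (q / 2) * I + 1) * exp (-(L * (1 + q))) := by gcongr; linarith
  · have hq1 : 0 < 1 + q := by
      have : (3 : ℝ) ≤ n := by exact_mod_cast hn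
      linarith
    simpa using (tendsto_exp_atBot.comp
      (tendsto_neg_atTop_atBot.comp (tendsto_id.atTop_mul_const hq1))).const_mul C
end

section
/- Let n ≥ 3 be an integer and let q be a real number with q ≥ n/2. Then there exists a constant C > 0 such that for all L ≥ 1 and all σ ≥ 1, e^{−L(n−1)} σ^{n−2} ((cosh L + e^{−L} σ²/2)² − 1)^{−q/2} ≤ C e^{L(1−q)} σ^{−2}. In particular, since q > 1, this tends to 0 as L → ∞ uniformly in σ ≥ 1. -/
open MeasureTheory Real Filter

/-! The base `X = cosh L + e^{-L} σ² / 2` satisfies `X² - 1 ≥ (X/2)²` once `L ≥ 1`, so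
`(X² - 1)^{-q/2} ≲ (2X)^{-q}`. Since `2X` dominates both `e^L` and `e^{-L} σ²`, splitting
`(2X)^q = (2X)^{q - n/2} (2X)^{n/2}` (which needs `q ≥ n/2`) gives
`(2X)^q ≥ e^{L(q - n)} σ^n`, and the factor `e^{-L(n-1)} σ^{n-2}` then leaves exactly
`e^{L(1-q)} σ^{-2}`. -/

theorem rpow_sq_sub_one_le {x q : ℝ} (hx : 0 < x) (hx2 : 4 / 3 ≤ x ^ 2) (hq : 0 ≤ q) :
    (x ^ 2 - 1) ^ (-q / 2) ≤ 4 ^ q * (2 * x) ^ (-q) := by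
  have hsq : (2 * x / 4) ^ 2 ≤ x ^ 2 - 1 := by nlinarith
  calc (x ^ 2 - 1) ^ (-q / 2) ≤ ((2 * x / 4) ^ 2) ^ (-q / 2) :=
        rpow_le_rpow_of_nonpos (by positivity) hsq (by linarith)
    _ = (2 * x / 4) ^ (-q) := by
        rw [← rpow_natCast, ← rpow_mul (by positivity)]
        ring_nf
    _ = 4 ^ q * (2 * x) ^ (-q) := by
        rw [div_rpow (by positivity) (by norm_num), rpow_neg (by norm_num : (0 : ℝ) ≤ 4) q,
          div_inv_eq_mul, mul_comm]

theorem rpow_sub_mul_rpow_le_rpow {a b x s q : ℝ} (ha : 0 ≤ a) (hb : 0 ≤ b) (hax : a ≤ x)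
    (hbx : b ≤ x) (hs : 0 ≤ s) (hsq : s ≤ q) : a ^ (q - s) * b ^ s ≤ x ^ q :=
  calc a ^ (q - s) * b ^ s ≤ x ^ (q - s) * x ^ s :=
        mul_le_mul (rpow_le_rpow ha hax (sub_nonneg.2 hsq)) (rpow_le_rpow hb hbx hs)
          (rpow_nonneg hb _) (rpow_nonneg (ha.trans hax) _)
    _ = x ^ q := by rw [← rpow_add_of_nonneg (ha.trans hax) (sub_nonneg.2 hsq) hs, sub_add_cancel]

theorem exp_mul_pow_le_two_mul_cosh_add_rpow {n : ℕ} {q L σ : ℝ} (hq : (n : ℝ) / 2 ≤ q)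
    (hσ : 0 < σ) :
    exp (L * (q - n)) * σ ^ n ≤ (2 * (cosh L + exp (-L) * σ ^ 2 / 2)) ^ q := by
  have hexp : exp L ≤ 2 * (cosh L + exp (-L) * σ ^ 2 / 2) := by
    rw [cosh_eq]
    nlinarith [exp_pos (-L)]
  have hσ2 : exp (-L) * σ ^ 2 ≤ 2 * (cosh L + exp (-L) * σ ^ 2 / 2) := by
    linarith [cosh_pos L]
  have hsplit := rpow_sub_mul_rpow_le_rpow (exp_pos L).le (by positivity) hexp hσ2
    (by positivity) hq
  have hσn : (σ ^ 2) ^ ((n : ℝ) / 2) = σ ^ n := by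
    rw [← rpow_natCast σ 2, ← rpow_mul hσ.le, ← rpow_natCast]
    ring_nf
  rwa [mul_rpow (exp_pos _).le (by positivity), ← exp_mul, ← exp_mul, hσn, ← mul_assoc,
    ← exp_add, show L * (q - n / 2) + -L * (n / 2) = L * (q - n) by ring] at hsplit

theorem bottom_edge_le {n : ℕ} (hn : 2 ≤ n) {q L σ : ℝ} (hq : (n : ℝ) / 2 ≤ q) (hL : 1 ≤ L)
    (hσ : 0 < σ) :
    exp (-(L * ((n : ℝ) - 1))) * σ ^ (n - 2) *
        ((cosh L + exp (-L) * σ ^ 2 / 2) ^ 2 - 1) ^ (-q / 2)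
      ≤ 4 ^ q * exp (L * (1 - q)) / σ ^ 2 := by
  set X := cosh L + exp (-L) * σ ^ 2 / 2
  have hX : cosh L ≤ X := le_add_of_nonneg_right (by positivity)
  have hX2 : 4 / 3 ≤ X ^ 2 := by
    have hsinh : 1 ≤ sinh L := hL.trans (self_le_sinh_iff.2 (by linarith))
    nlinarith [cosh_sq L, cosh_pos L]
  have hX0 : 0 < X := (cosh_pos L).trans_le hX
  have hσn : σ ^ n = σ ^ (n - 2) * σ ^ 2 := by rw [← pow_add, Nat.sub_add_cancel hn]
  have hexp : exp (-(L * ((n : ℝ) - 1))) = exp (L * (1 - q)) * exp (L * (q - n)) := by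
    rw [← exp_add]; ring_nf
  calc exp (-(L * ((n : ℝ) - 1))) * σ ^ (n - 2) * (X ^ 2 - 1) ^ (-q / 2)
      ≤ exp (-(L * ((n : ℝ) - 1))) * σ ^ (n - 2) * (4 ^ q * ((2 * X) ^ q)⁻¹) := by
        rw [← rpow_neg (by linarith)]
        gcongr
        exact rpow_sq_sub_one_le hX0 hX2 ((by positivity : (0 : ℝ) ≤ n / 2).trans hq)
    _ ≤ exp (-(L * ((n : ℝ) - 1))) * σ ^ (n - 2) * (4 ^ q * (exp (L * (q - n)) * σ ^ n)⁻¹) := by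
        gcongr
        exact exp_mul_pow_le_two_mul_cosh_add_rpow hq hσ
    _ = 4 ^ q * exp (L * (1 - q)) / σ ^ 2 := by
        rw [hσn, hexp]
        field_simp

/-- Bottom-edge estimate `E₋,L`: for `n ≥ 3` and `q ≥ n/2`, there is `C > 0` with
`e^{−L(n−1)} σ^{n−2} ((cosh L + e^{−L} σ²/2)² − 1)^{−q/2} ≤ C e^{L(1−q)} σ^{−2}`
for all `L ≥ 1, σ ≥ 1`; since `q > 1`, the quantity tends to `0` as `L → ∞`,
uniformly in `σ ≥ 1`. -/
theorem stmt_3 (n : ℕ) (hn : 3 ≤ n) (q : ℝ) (hq : (n : ℝ) / 2 ≤ q) :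
    (∃ C : ℝ, 0 < C ∧ ∀ L : ℝ, 1 ≤ L → ∀ σ : ℝ, 1 ≤ σ →
      Real.exp (-(L * ((n : ℝ) - 1))) * σ ^ (n - 2) *
          ((Real.cosh L + Real.exp (-L) * σ ^ 2 / 2) ^ 2 - 1) ^ (-q / 2)
        ≤ C * Real.exp (L * (1 - q)) / σ ^ 2) ∧
    (1 < q) ∧
    (∀ ε : ℝ, 0 < ε → ∃ L₀ : ℝ, ∀ L : ℝ, L₀ ≤ L → ∀ σ : ℝ, 1 ≤ σ →
      Real.exp (-(L * ((n : ℝ) - 1))) * σ ^ (n - 2) *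
          ((Real.cosh L + Real.exp (-L) * σ ^ 2 / 2) ^ 2 - 1) ^ (-q / 2) < ε) := by
  have hq1 : 1 < q := by
    have : (3 : ℝ) ≤ n := by exact_mod_cast hn
    linarith
  have bound : ∀ L : ℝ, 1 ≤ L → ∀ σ : ℝ, 1 ≤ σ → _ := fun L hL σ hσ =>
    bottom_edge_le (by omega) hq hL (by linarith : (0 : ℝ) < σ)
  refine ⟨⟨4 ^ q, by positivity, bound⟩, hq1, fun ε hε => ?_⟩
  have hdecay : Tendsto (fun L => 4 ^ q * exp (L * (1 - q))) atTop (nhds 0) := by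
    simpa using (tendsto_exp_atBot.comp
      (tendsto_id.atTop_mul_const_of_neg (sub_neg.2 hq1))).const_mul (4 ^ q)
  obtain ⟨L₁, hL₁⟩ := eventually_atTop.1 (hdecay.eventually (gt_mem_nhds hε))
  refine ⟨max 1 L₁, fun L hL σ hσ => ?_⟩
  calc _ ≤ 4 ^ q * exp (L * (1 - q)) / σ ^ 2 := bound L (le_of_max_le_left hL) σ hσ
    _ ≤ 4 ^ q * exp (L * (1 - q)) := div_le_self (by positivity) (one_le_pow₀ hσ)
    _ < ε := hL₁ L (le_of_max_le_right hL)
end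

section
/- Let n ≥ 3 be an integer and let q be a real number with q ≥ n/2. Then there exists a constant C > 0 such that for all L ≥ 1 and all σ ≥ 1, ∫_{−L}^{0} e^{x(n−1)} σ^{n−2} (2/(e^x + e^{−x} + e^x σ²))^q dx ≤ C σ^{−2}. In particular this tends to 0 as σ → ∞, uniformly in L ≥ 1. -/
/-!
Since `e^x + e^{-x} ≥ 2`, the base `2 / (e^x + e^{-x} + e^x σ²)` lies in `(0, 1]`, so raising it to
`q ≥ n/2` only makes it smaller; bounding it by `2 e^{-x} / σ²` then turns the integrand into
`2^{n/2} e^{x(n/2 - 1)} / σ²`, whose integral over `(-∞, 0]` is finite because `n/2 - 1 > 0`.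
-/

open MeasureTheory Real Filter

namespace LateralSurface

/-- `denom σ x / 2 = √(1 + r²)` at the point `(x, σ)` of the lateral surface. -/
noncomputable abbrev denom (σ x : ℝ) : ℝ := exp x + exp (-x) + exp x * σ ^ 2

lemma two_le_denom (σ x : ℝ) : 2 ≤ denom σ x := by
  have hcosh : 2 ≤ exp x + exp (-x) := by linarith [one_le_cosh x, cosh_eq x]
  have : 0 ≤ exp x * σ ^ 2 := by positivity
  linarith

lemma denom_pos (σ x : ℝ) : 0 < denom σ x := two_pos.trans_le (two_le_denom σ x)

lemma two_div_denom_le_one (σ x : ℝ) : 2 / denom σ x ≤ 1 :=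
  (div_le_one (denom_pos σ x)).2 (two_le_denom σ x)

lemma two_div_denom_le (x : ℝ) {σ : ℝ} (hσ : 0 < σ) :
    2 / denom σ x ≤ 2 * exp (-x) / σ ^ 2 := by
  have hle : exp x * σ ^ 2 ≤ denom σ x := by
    have : 0 < exp x + exp (-x) := by positivity
    linarith
  calc 2 / denom σ x ≤ 2 / (exp x * σ ^ 2) := by gcongr
    _ = 2 * exp (-x) / σ ^ 2 := by rw [exp_neg]; field_simp

lemma rpow_two_div_denom_le (x : ℝ) {σ : ℝ} (hσ : 0 < σ) {a q : ℝ} (ha : 0 ≤ a) (haq : a ≤ q) :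
    (2 / denom σ x) ^ q ≤ 2 ^ a * exp (-(x * a)) / (σ ^ 2) ^ a := by
  have hpos : 0 < 2 / denom σ x := div_pos two_pos (denom_pos σ x)
  calc (2 / denom σ x) ^ q ≤ (2 / denom σ x) ^ a :=
        rpow_le_rpow_of_exponent_ge hpos (two_div_denom_le_one σ x) haq
    _ ≤ (2 * exp (-x) / σ ^ 2) ^ a := rpow_le_rpow hpos.le (two_div_denom_le x hσ) ha
    _ = 2 ^ a * exp (-(x * a)) / (σ ^ 2) ^ a := by
        rw [div_rpow (by positivity) (by positivity), mul_rpow zero_le_two (exp_nonneg _),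
          ← exp_mul, neg_mul]

lemma integrand_le {n : ℕ} (hn : 2 ≤ n) {q : ℝ} (hq : (n : ℝ) / 2 ≤ q) {σ : ℝ} (hσ : 0 < σ)
    (x : ℝ) :
    exp (x * ((n : ℝ) - 1)) * σ ^ (n - 2) * (2 / denom σ x) ^ q
      ≤ 2 ^ ((n : ℝ) / 2) * exp (x * ((n : ℝ) / 2 - 1)) / σ ^ 2 := by
  have hσn : (σ ^ 2) ^ ((n : ℝ) / 2) = σ ^ (n - 2) * σ ^ 2 := by
    rw [← pow_add, Nat.sub_add_cancel hn, ← rpow_natCast σ 2, ← rpow_mul hσ.le, ← rpow_natCast]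
    congr 1
    push_cast
    ring
  calc exp (x * ((n : ℝ) - 1)) * σ ^ (n - 2) * (2 / denom σ x) ^ q
      ≤ exp (x * ((n : ℝ) - 1)) * σ ^ (n - 2) *
          (2 ^ ((n : ℝ) / 2) * exp (-(x * ((n : ℝ) / 2))) / (σ ^ 2) ^ ((n : ℝ) / 2)) := by
        gcongr
        exact rpow_two_div_denom_le x hσ (by positivity) hq
    _ = 2 ^ ((n : ℝ) / 2) * exp (x * ((n : ℝ) / 2 - 1)) / σ ^ 2 := by
        have hexp : exp (x * ((n : ℝ) / 2 - 1))
            = exp (x * ((n : ℝ) - 1)) * exp (-(x * ((n : ℝ) / 2))) := by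
          rw [← exp_add]; ring_nf
        rw [hσn, hexp]
        field_simp

lemma integral_exp_mul_le_inv {c : ℝ} (hc : 0 < c) (L : ℝ) :
    ∫ x in (-L)..0, exp (x * c) ≤ c⁻¹ := by
  rw [intervalIntegral.integral_comp_mul_right exp hc.ne', integral_exp, smul_eq_mul,
    zero_mul, exp_zero]
  exact mul_le_of_le_one_right (inv_nonneg.2 hc.le) (by linarith [exp_pos (-L * c)])

lemma integral_le_div_sq {n : ℕ} (hn : 3 ≤ n) {q : ℝ} (hq : (n : ℝ) / 2 ≤ q)
    {L : ℝ} (hL : 0 ≤ L) {σ : ℝ} (hσ : 0 < σ) :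
    ∫ x in (-L)..0, exp (x * ((n : ℝ) - 1)) * σ ^ (n - 2) * (2 / denom σ x) ^ q
      ≤ 2 ^ ((n : ℝ) / 2) / ((n : ℝ) / 2 - 1) / σ ^ 2 := by
  have hc : 0 < (n : ℝ) / 2 - 1 := by
    have : (3 : ℝ) ≤ n := by exact_mod_cast hn
    linarith
  have hq0 : 0 ≤ q := le_trans (by positivity) hq
  have hcont :
      Continuous fun x ↦ exp (x * ((n : ℝ) - 1)) * σ ^ (n - 2) * (2 / denom σ x) ^ q := by
    refine Continuous.mul (by fun_prop) (Continuous.rpow_const ?_ fun _ ↦ Or.inr hq0)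
    exact continuous_const.div (by fun_prop) fun x ↦ (denom_pos σ x).ne'
  calc _ ≤ ∫ x in (-L)..0, 2 ^ ((n : ℝ) / 2) * exp (x * ((n : ℝ) / 2 - 1)) / σ ^ 2 :=
        intervalIntegral.integral_mono_on (by linarith) (hcont.intervalIntegrable _ _)
          (Continuous.intervalIntegrable (by fun_prop) _ _)
          fun x _ ↦ integrand_le (by omega) hq hσ x
    _ = 2 ^ ((n : ℝ) / 2) / σ ^ 2 * ∫ x in (-L)..0, exp (x * ((n : ℝ) / 2 - 1)) := by
        rw [← intervalIntegral.integral_const_mul]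
        congr 1 with x
        ring
    _ ≤ 2 ^ ((n : ℝ) / 2) / σ ^ 2 * ((n : ℝ) / 2 - 1)⁻¹ := by
        gcongr
        exact integral_exp_mul_le_inv hc L
    _ = 2 ^ ((n : ℝ) / 2) / ((n : ℝ) / 2 - 1) / σ ^ 2 := by ring

end LateralSurface

open LateralSurface in
/-- Lower lateral-surface estimate on `{−L ≤ x₁ ≤ 0}` of `S_L`: for `n ≥ 3`, `q ≥ n/2`,
there is `C > 0` with `∫_{−L}^0 e^{x(n−1)} σ^{n−2} (2/(e^x + e^{−x} + e^x σ²))^q dx ≤ C σ^{−2}`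
for all `L ≥ 1, σ ≥ 1`; in particular the integral tends to `0` as `σ → ∞`,
uniformly in `L ≥ 1`. -/
theorem stmt_5 (n : ℕ) (hn : 3 ≤ n) (q : ℝ) (hq : (n : ℝ) / 2 ≤ q) :
    (∃ C : ℝ, 0 < C ∧ ∀ L : ℝ, 1 ≤ L → ∀ σ : ℝ, 1 ≤ σ →
      (∫ x in (-L)..(0:ℝ),
          Real.exp (x * ((n : ℝ) - 1)) * σ ^ (n - 2) *
            (2 / (Real.exp x + Real.exp (-x) + Real.exp x * σ ^ 2)) ^ q)
        ≤ C / σ ^ 2) ∧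
    (∀ ε : ℝ, 0 < ε → ∃ σ₀ : ℝ, ∀ σ : ℝ, σ₀ ≤ σ → ∀ L : ℝ, 1 ≤ L →
      (∫ x in (-L)..(0:ℝ),
          Real.exp (x * ((n : ℝ) - 1)) * σ ^ (n - 2) *
            (2 / (Real.exp x + Real.exp (-x) + Real.exp x * σ ^ 2)) ^ q) < ε) := by
  set C := 2 ^ ((n : ℝ) / 2) / ((n : ℝ) / 2 - 1)
  have hC : 0 < C := by
    have : (3 : ℝ) ≤ n := by exact_mod_cast hn
    exact div_pos (by positivity) (by linarith)
  have bound : ∀ L : ℝ, 1 ≤ L → ∀ σ : ℝ, 1 ≤ σ →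
      ∫ x in (-L)..0, exp (x * ((n : ℝ) - 1)) * σ ^ (n - 2) * (2 / denom σ x) ^ q ≤ C / σ ^ 2 :=
    fun L hL σ hσ ↦ integral_le_div_sq hn hq (by linarith) (by linarith)
  refine ⟨⟨C, hC, bound⟩, fun ε hε ↦ ?_⟩
  have hlim : Tendsto (fun σ : ℝ ↦ C / σ ^ 2) atTop (nhds 0) :=
    tendsto_const_nhds.div_atTop (tendsto_pow_atTop two_ne_zero)
  obtain ⟨σ₀, hσ₀⟩ := eventually_atTop.1 ((hlim.eventually (gt_mem_nhds hε)).and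
    (eventually_ge_atTop 1))
  exact ⟨σ₀, fun σ hσ L hL ↦ (bound L hL σ (hσ₀ σ hσ).2).trans_lt (hσ₀ σ hσ).1⟩
end

section
/- Let n ≥ 3 be an integer and let q be a real number with q ≥ n/2. Then there exists a constant C > 0 such that for all L ≥ 1 and all σ ≥ 1, ∫_{−L}^{0} e^{x(n−2)} σ^{n−3} (2/(e^x + e^{−x} + e^x σ²))^q dx ≤ C σ^{−2}. In particular this tends to 0 as σ → ∞, uniformly in L ≥ 1. -/
/-!
Since the denominator `D = eˣ + e⁻ˣ + eˣσ²` dominates both `e⁻ˣ` and `eˣσ²`, it dominates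
`(e⁻ˣ)^(q - a) (eˣσ²)^a` for `0 ≤ a ≤ q`; the choice `a = (n - 1)/2` makes the powers of `σ`
collapse to `σ⁻²`. The integrand is then at most `2^q e^{(q-1)x} / σ²`, whose integral over
`(-∞, 0]` is `2^q / ((q - 1) σ²)` because `q ≥ n/2 > 1`.
-/

open Real Filter

theorem rpow_sub_mul_rpow_le_rpow_s6 {u v D a q : ℝ} (hu : 0 < u) (hv : 0 ≤ v) (huD : u ≤ D)
    (hvD : v ≤ D) (ha : 0 ≤ a) (haq : a ≤ q) : u ^ (q - a) * v ^ a ≤ D ^ q :=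
  calc u ^ (q - a) * v ^ a
      ≤ D ^ (q - a) * D ^ a :=
        mul_le_mul (rpow_le_rpow hu.le huD (sub_nonneg.2 haq)) (rpow_le_rpow hv hvD ha)
          (rpow_nonneg hv a) (rpow_nonneg (hu.le.trans huD) _)
    _ = D ^ q := by rw [← rpow_add (hu.trans_le huD), sub_add_cancel]

theorem integral_exp_mul_neg_le {c : ℝ} (hc : 0 < c) (L : ℝ) :
    ∫ x in (-L)..0, exp (c * x) ≤ c⁻¹ := by
  rw [intervalIntegral.integral_comp_mul_left (fun x => exp x) hc.ne', integral_exp,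
    mul_zero, exp_zero, smul_eq_mul]
  have : 0 < exp (c * -L) := exp_pos _
  exact mul_le_of_le_one_right (inv_nonneg.2 hc.le) (by linarith)

theorem lateral_integrand_le (n : ℕ) (hn : 3 ≤ n) {q : ℝ} (hq : ((n : ℝ) - 1) / 2 ≤ q)
    {σ : ℝ} (hσ : 0 < σ) (x : ℝ) :
    exp (x * ((n : ℝ) - 2)) * σ ^ (n - 3) *
        (2 / (exp x + exp (-x) + exp x * σ ^ 2)) ^ q
      ≤ 2 ^ q * exp ((q - 1) * x) / σ ^ 2 := by
  set a : ℝ := ((n : ℝ) - 1) / 2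
  set D := exp x + exp (-x) + exp x * σ ^ 2
  have hD : 0 < D := by positivity
  have hn1 : (1 : ℝ) ≤ n := by exact_mod_cast (by omega : 1 ≤ n)
  have hσa : (σ ^ 2) ^ a = σ ^ (n - 1) := by
    rw [← rpow_natCast σ 2, ← rpow_mul hσ.le, ← rpow_natCast, Nat.cast_sub (by omega)]
    congr 1
    push_cast
    ring
  have hm : exp (-x * (q - a)) * (exp (x * a) * σ ^ (n - 1)) ≤ D ^ q := by
    have := rpow_sub_mul_rpow_le_rpow_s6 (exp_pos (-x)) (by positivity)
      (show exp (-x) ≤ D by linarith [exp_pos x, show 0 < exp x * σ ^ 2 by positivity])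
      (show exp x * σ ^ 2 ≤ D by linarith [exp_pos x, exp_pos (-x)])
      (show 0 ≤ a by positivity) hq
    rwa [mul_rpow (exp_pos x).le (by positivity), hσa, ← exp_mul, ← exp_mul] at this
  have hpow : σ ^ (n - 3) * σ ^ 2 = σ ^ (n - 1) := by
    rw [← pow_add]
    congr 1
    omega
  have hexp : exp (x * ((n : ℝ) - 2)) = exp ((q - 1) * x) * exp (-x * (q - a)) * exp (x * a) := by
    rw [← exp_add, ← exp_add]
    congr 1
    ring
  calc exp (x * ((n : ℝ) - 2)) * σ ^ (n - 3) * (2 / D) ^ q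
      = 2 ^ q * exp ((q - 1) * x) * (exp (-x * (q - a)) * (exp (x * a) * σ ^ (n - 1)))
          / (σ ^ 2 * D ^ q) := by
        rw [div_rpow zero_le_two hD.le, hexp, ← hpow]
        field_simp
    _ ≤ 2 ^ q * exp ((q - 1) * x) * D ^ q / (σ ^ 2 * D ^ q) := by gcongr
    _ = 2 ^ q * exp ((q - 1) * x) / σ ^ 2 := by field_simp

theorem lateral_integral_le (n : ℕ) (hn : 3 ≤ n) {q : ℝ} (hq : ((n : ℝ) - 1) / 2 ≤ q)
    (hq1 : 1 < q) {L : ℝ} (hL : 0 ≤ L) {σ : ℝ} (hσ : 0 < σ) :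
    ∫ x in (-L)..0, exp (x * ((n : ℝ) - 2)) * σ ^ (n - 3) *
        (2 / (exp x + exp (-x) + exp x * σ ^ 2)) ^ q
      ≤ 2 ^ q / (q - 1) / σ ^ 2 := by
  have hD : ∀ x : ℝ, exp x + exp (-x) + exp x * σ ^ 2 ≠ 0 := fun x => by positivity
  calc _ ≤ ∫ x in (-L)..0, 2 ^ q * exp ((q - 1) * x) / σ ^ 2 :=
        intervalIntegral.integral_mono_on (by linarith)
          (Continuous.intervalIntegrable (by fun_prop (disch := first | exact hD _ | linarith)) _ _)
          (Continuous.intervalIntegrable (by fun_prop) _ _)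
          fun x _ => lateral_integrand_le n hn hq hσ x
    _ = 2 ^ q * (∫ x in (-L)..0, exp ((q - 1) * x)) / σ ^ 2 := by
        rw [intervalIntegral.integral_div, intervalIntegral.integral_const_mul]
    _ ≤ 2 ^ q * (q - 1)⁻¹ / σ ^ 2 := by
        gcongr
        exact integral_exp_mul_neg_le (by linarith) L
    _ = 2 ^ q / (q - 1) / σ ^ 2 := by rw [div_eq_mul_inv (2 ^ q)]

/-- Lateral second-fundamental-form term on `{−L ≤ x₁ ≤ 0}` of `S_L`: for `n ≥ 3`,
`q ≥ n/2`, there is `C > 0` with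
`∫_{−L}^0 e^{x(n−2)} σ^{n−3} (2/(e^x + e^{−x} + e^x σ²))^q dx ≤ C σ^{−2}` for all
`L ≥ 1, σ ≥ 1`; in particular the integral tends to `0` as `σ → ∞`, uniformly in `L ≥ 1`. -/
theorem stmt_6 (n : ℕ) (hn : 3 ≤ n) (q : ℝ) (hq : (n : ℝ) / 2 ≤ q) :
    (∃ C : ℝ, 0 < C ∧ ∀ L : ℝ, 1 ≤ L → ∀ σ : ℝ, 1 ≤ σ →
      (∫ x in (-L)..(0:ℝ),
          Real.exp (x * ((n : ℝ) - 2)) * σ ^ (n - 3) *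
            (2 / (Real.exp x + Real.exp (-x) + Real.exp x * σ ^ 2)) ^ q)
        ≤ C / σ ^ 2) ∧
    (∀ ε : ℝ, 0 < ε → ∃ σ₀ : ℝ, ∀ σ : ℝ, σ₀ ≤ σ → ∀ L : ℝ, 1 ≤ L →
      (∫ x in (-L)..(0:ℝ),
          Real.exp (x * ((n : ℝ) - 2)) * σ ^ (n - 3) *
            (2 / (Real.exp x + Real.exp (-x) + Real.exp x * σ ^ 2)) ^ q) < ε) := by
  have hn3 : (3 : ℝ) ≤ n := by exact_mod_cast hn
  have hq1 : 1 < q := by linarith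
  set C := 2 ^ q / (q - 1)
  have hC : 0 < C := div_pos (by positivity) (by linarith)
  have bound : ∀ L : ℝ, 1 ≤ L → ∀ σ : ℝ, 1 ≤ σ →
      (∫ x in (-L)..(0:ℝ), exp (x * ((n : ℝ) - 2)) * σ ^ (n - 3) *
          (2 / (exp x + exp (-x) + exp x * σ ^ 2)) ^ q) ≤ C / σ ^ 2 :=
    fun L hL σ hσ => lateral_integral_le n hn (by linarith) hq1 (by linarith) (by linarith)
  refine ⟨⟨C, hC, bound⟩, fun ε hε => ?_⟩
  obtain ⟨σ₀, hσ₀⟩ := eventually_atTop.1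
    (((tendsto_pow_atTop two_ne_zero).const_div_atTop C).eventually (gt_mem_nhds hε))
  exact ⟨max σ₀ 1, fun σ hσ L hL =>
    (bound L hL σ (le_of_max_le_right hσ)).trans_lt (hσ₀ σ (le_of_max_le_left hσ))⟩
end

section
/- Let n ≥ 3 be an integer, let q > n/2 be a real number, and let σ : [1, ∞) → [1, ∞) be a function with σ(L) → ∞ as L → ∞. Assume additionally that e^{L(n−1−q)} σ(L)^{n−2−2q} → 0 as L → ∞ if q < n − 1, and that L·σ(L)^{n−2−2q} → 0 as L → ∞ if q = n − 1 (no extra assumption if q > n − 1). Then both of the following hold as L → ∞: (i) e^{L(n−1)} σ(L)^{n−2} ((cosh L + e^L σ(L)²/2)² − 1)^{−q/2} → 0, and (ii) ∫₀^L e^{x(n−1)} σ(L)^{n−2} (2/(e^x + e^{−x} + e^x σ(L)²))^q dx → 0. -/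
/-!
Write `s = σ L`, `c = n - 1 - q` and `e = n - 2 - 2q < 0`. Keeping only the dominant term
`a = eˣ s² / 2`, via `(cosh L + a)² - 1 ≥ a²` and `eˣ + e⁻ˣ + eˣ s² ≥ eˣ s²`, bounds the two
quantities by `2^q e^{Lc} s^e` and `2^q s^e ∫₀^L e^{xc} dx`. The first tends to `0` by
hypothesis when `c > 0`, and otherwise because `e^{Lc} ≤ 1` and `s^e → 0`. For `c ≠ 0` the
integral is `(e^{Lc} - 1) / c`, which reduces the second to the first; for `c = 0` it is `L`,
and the hypothesis for `q = n - 1` applies.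
-/

open MeasureTheory Real Filter

lemma exp_mul_pow_mul_rpow_neg {n : ℕ} (hn : 2 ≤ n) (q x : ℝ) {s : ℝ} (hs : 0 < s) :
    exp (x * ((n : ℝ) - 1)) * s ^ (n - 2) * (exp x * s ^ 2 / 2) ^ (-q) =
      2 ^ q * (exp (x * ((n : ℝ) - 1 - q)) * s ^ ((n : ℝ) - 2 - 2 * q)) := by
  have hcast : ((n - 2 : ℕ) : ℝ) = (n : ℝ) - 2 := by rw [Nat.cast_sub hn]; norm_num
  rw [← Real.rpow_natCast s, hcast, Real.div_rpow (by positivity) zero_le_two,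
    Real.mul_rpow (exp_pos x).le (by positivity), ← Real.exp_mul, ← Real.rpow_natCast s 2,
    ← Real.rpow_mul hs.le, Real.rpow_neg zero_le_two, div_inv_eq_mul,
    show (n : ℝ) - 2 - 2 * q = (n - 2) + (2 : ℕ) * (-q) by push_cast; ring,
    Real.rpow_add hs, show x * ((n : ℝ) - 1 - q) = x * (n - 1) + x * -q by ring, Real.exp_add]
  ring

lemma sq_le_cosh_add_sq_sub_one {a : ℝ} (ha : 0 ≤ a) (L : ℝ) :
    a ^ 2 ≤ (cosh L + a) ^ 2 - 1 := by
  nlinarith [one_le_cosh L]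

lemma cosh_add_sq_sub_one_rpow_le {a : ℝ} (ha : 0 < a) {q : ℝ} (hq : 0 ≤ q) (L : ℝ) :
    ((cosh L + a) ^ 2 - 1) ^ (-q / 2) ≤ a ^ (-q) := by
  calc ((cosh L + a) ^ 2 - 1) ^ (-q / 2) ≤ (a ^ 2) ^ (-q / 2) :=
        Real.rpow_le_rpow_of_nonpos (by positivity) (sq_le_cosh_add_sq_sub_one ha.le L)
          (by linarith)
    _ = a ^ (-q) := by
        rw [← Real.rpow_natCast, ← Real.rpow_mul ha.le]; ring_nf

lemma two_div_exp_add_exp_neg_add_rpow_le {s : ℝ} (hs : 0 < s) {q : ℝ} (hq : 0 ≤ q) (x : ℝ) :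
    (2 / (exp x + exp (-x) + exp x * s ^ 2)) ^ q ≤ (exp x * s ^ 2 / 2) ^ (-q) := by
  rw [Real.rpow_neg (by positivity), ← Real.inv_rpow (by positivity), inv_div]
  gcongr
  linarith [exp_pos x, exp_pos (-x)]

lemma integral_lateral_le {n : ℕ} (hn : 2 ≤ n) {q : ℝ} (hq : 0 ≤ q) {s : ℝ} (hs : 0 < s) {L : ℝ}
    (hL : 0 ≤ L) :
    ∫ x in (0 : ℝ)..L, exp (x * ((n : ℝ) - 1)) * s ^ (n - 2) *
        (2 / (exp x + exp (-x) + exp x * s ^ 2)) ^ q ≤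
      2 ^ q * (s ^ ((n : ℝ) - 2 - 2 * q) * ∫ x in (0 : ℝ)..L, exp (x * ((n : ℝ) - 1 - q))) := by
  rw [← intervalIntegral.integral_const_mul, ← intervalIntegral.integral_const_mul]
  refine intervalIntegral.integral_mono_on hL ?_ ?_ fun x _ => ?_
  · exact Continuous.intervalIntegrable
      (by fun_prop (disch := intros; first | positivity | exact Or.inr hq)) _ _
  · exact Continuous.intervalIntegrable (by fun_prop) _ _
  calc _ ≤ exp (x * ((n : ℝ) - 1)) * s ^ (n - 2) * (exp x * s ^ 2 / 2) ^ (-q) := by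
        gcongr
        exact two_div_exp_add_exp_neg_add_rpow_le hs hq x
    _ = _ := by rw [exp_mul_pow_mul_rpow_neg hn q x hs]; ring

lemma tendsto_rpow_comp_of_neg {σ : ℝ → ℝ} (hσ : Tendsto σ atTop atTop) {e : ℝ} (he : e < 0) :
    Tendsto (fun L => σ L ^ e) atTop (nhds 0) := by
  simpa [Function.comp_def] using (tendsto_rpow_neg_atTop (neg_pos.mpr he)).comp hσ

lemma tendsto_exp_mul_mul_rpow_of_neg {σ : ℝ → ℝ} {c e : ℝ} (he : e < 0)
    (hσ : Tendsto σ atTop atTop)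
    (hpos : 0 < c → Tendsto (fun L => exp (L * c) * σ L ^ e) atTop (nhds 0)) :
    Tendsto (fun L => exp (L * c) * σ L ^ e) atTop (nhds 0) := by
  rcases lt_or_ge 0 c with hc | hc
  · exact hpos hc
  refine squeeze_zero' ?_ ?_ (tendsto_rpow_comp_of_neg hσ he)
  · filter_upwards [hσ.eventually_ge_atTop 0] with L hL
    exact mul_nonneg (exp_pos _).le (Real.rpow_nonneg hL _)
  · filter_upwards [hσ.eventually_ge_atTop 0, eventually_ge_atTop 0] with L hσL hL
    exact mul_le_of_le_one_left (Real.rpow_nonneg hσL _)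
      (exp_le_one_iff.mpr (mul_nonpos_of_nonneg_of_nonpos hL hc))

lemma integral_exp_mul_of_ne_zero {c : ℝ} (hc : c ≠ 0) (L : ℝ) :
    ∫ x in (0 : ℝ)..L, exp (x * c) = c⁻¹ * (exp (L * c) - 1) := by
  simp [intervalIntegral.integral_comp_mul_right _ hc]

lemma tendsto_rpow_mul_integral_exp_mul {σ : ℝ → ℝ} {c e : ℝ} (he : e < 0)
    (hσ : Tendsto σ atTop atTop)
    (hpos : 0 < c → Tendsto (fun L => exp (L * c) * σ L ^ e) atTop (nhds 0))
    (hzero : c = 0 → Tendsto (fun L => L * σ L ^ e) atTop (nhds 0)) :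
    Tendsto (fun L => σ L ^ e * ∫ x in (0 : ℝ)..L, exp (x * c)) atTop (nhds 0) := by
  rcases eq_or_ne c 0 with hc | hc
  · simpa [hc, mul_comm] using hzero hc
  have hlim : Tendsto (fun L => c⁻¹ * (exp (L * c) * σ L ^ e - σ L ^ e)) atTop (nhds 0) := by
    simpa using ((tendsto_exp_mul_mul_rpow_of_neg he hσ hpos).sub
      (tendsto_rpow_comp_of_neg hσ he)).const_mul c⁻¹
  refine hlim.congr fun L => ?_
  rw [integral_exp_mul_of_ne_zero hc]
  ring

theorem stmt_8_general (n : ℕ) (hn : 3 ≤ n) (q : ℝ) (hq : (n : ℝ) / 2 < q)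
    (σ : ℝ → ℝ)
    (hσtop : Tendsto σ atTop atTop)
    (hcond1 : q < (n : ℝ) - 1 →
      Tendsto (fun L : ℝ => Real.exp (L * ((n : ℝ) - 1 - q)) * σ L ^ ((n : ℝ) - 2 - 2 * q))
        atTop (nhds 0))
    (hcond2 : q = (n : ℝ) - 1 →
      Tendsto (fun L : ℝ => L * σ L ^ ((n : ℝ) - 2 - 2 * q)) atTop (nhds 0)) :
    Tendsto (fun L : ℝ =>
        Real.exp (L * ((n : ℝ) - 1)) * σ L ^ (n - 2) *
          ((Real.cosh L + Real.exp L * σ L ^ 2 / 2) ^ 2 - 1) ^ (-q / 2))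
      atTop (nhds 0) ∧
    Tendsto (fun L : ℝ =>
        ∫ x in (0:ℝ)..L,
          Real.exp (x * ((n : ℝ) - 1)) * σ L ^ (n - 2) *
            (2 / (Real.exp x + Real.exp (-x) + Real.exp x * σ L ^ 2)) ^ q)
      atTop (nhds 0) := by
  have hn2 : 2 ≤ n := by omega
  have hq0 : 0 ≤ q := by linarith [(n.cast_nonneg : (0 : ℝ) ≤ n)]
  have he : (n : ℝ) - 2 - 2 * q < 0 := by linarith
  have hpos : 0 < (n : ℝ) - 1 - q → _ := fun h => hcond1 (by linarith)
  have hzero : (n : ℝ) - 1 - q = 0 → _ := fun h => hcond2 (by linarith)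
  constructor
  · refine squeeze_zero' ?_ ?_
      (by simpa using (tendsto_exp_mul_mul_rpow_of_neg he hσtop hpos).const_mul (2 ^ q))
    · filter_upwards [hσtop.eventually_gt_atTop 0] with L hs
      have hbase := sq_le_cosh_add_sq_sub_one (a := exp L * σ L ^ 2 / 2) (by positivity) L
      exact mul_nonneg (by positivity) (Real.rpow_nonneg ((sq_nonneg _).trans hbase) _)
    · filter_upwards [hσtop.eventually_gt_atTop 0] with L hs
      rw [← exp_mul_pow_mul_rpow_neg hn2 q L hs]
      gcongr
      exact cosh_add_sq_sub_one_rpow_le (by positivity) hq0 L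
  · refine squeeze_zero' ?_ ?_
      (by simpa using (tendsto_rpow_mul_integral_exp_mul he hσtop hpos hzero).const_mul (2 ^ q))
    · filter_upwards [hσtop.eventually_gt_atTop 0, eventually_ge_atTop 0] with L hs hL
      refine intervalIntegral.integral_nonneg hL fun x _ => ?_
      positivity
    · filter_upwards [hσtop.eventually_gt_atTop 0, eventually_ge_atTop 0] with L hs hL
      exact integral_lateral_le hn2 hq0 hs hL

/-- Combined top-edge and upper lateral estimates along the cylinders
`C_L = {|x₁| ≤ L, |x̂| ≤ σ(L)}`: under the width condition (1.4) of the paper on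
`σ : [1,∞) → [1,∞)`, both the top-edge flux term and the upper lateral flux term
tend to `0` as `L → ∞`. -/
theorem stmt_8 (n : ℕ) (hn : 3 ≤ n) (q : ℝ) (hq : (n : ℝ) / 2 < q)
    (σ : ℝ → ℝ) (hσ1 : ∀ L : ℝ, 1 ≤ L → 1 ≤ σ L)
    (hσtop : Tendsto σ atTop atTop)
    (hcond1 : q < (n : ℝ) - 1 →
      Tendsto (fun L : ℝ => Real.exp (L * ((n : ℝ) - 1 - q)) * σ L ^ ((n : ℝ) - 2 - 2 * q))
        atTop (nhds 0))
    (hcond2 : q = (n : ℝ) - 1 →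
      Tendsto (fun L : ℝ => L * σ L ^ ((n : ℝ) - 2 - 2 * q)) atTop (nhds 0)) :
    Tendsto (fun L : ℝ =>
        Real.exp (L * ((n : ℝ) - 1)) * σ L ^ (n - 2) *
          ((Real.cosh L + Real.exp L * σ L ^ 2 / 2) ^ 2 - 1) ^ (-q / 2))
      atTop (nhds 0) ∧
    Tendsto (fun L : ℝ =>
        ∫ x in (0:ℝ)..L,
          Real.exp (x * ((n : ℝ) - 1)) * σ L ^ (n - 2) *
            (2 / (Real.exp x + Real.exp (-x) + Real.exp x * σ L ^ 2)) ^ q)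
      atTop (nhds 0) :=
  stmt_8_general n hn q hq σ hσtop hcond1 hcond2
end

section
/- Let n ≥ 3 be an integer. For L > 0 and ρ > 0 define t_L(ρ) = cosh L + e^L ρ²/2, r_L(ρ) = √(t_L(ρ)² − 1), and z_L(ρ) = t_L(ρ) − e^L. Then lim_{L→∞} ∫₀^∞ e^{L(n−1)} r_L(ρ)^{1−n} (1 − z_L(ρ)/r_L(ρ)) ρ^{n−2} dρ = √π · Γ((n−1)/2) / Γ(n/2). -/
/-!
Dividing `t_L`, `r_L`, `z_L` by `e^L` turns the integrand into a function of `ρ` and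
`ε = e^{-2L}` alone. It is continuous at `ε = 0`, where it equals `((1 + ρ²)/2)^{-n} ρ^{n-2}`,
and for `0 ≤ ε ≤ 1/2` it is dominated by `2 ((1 + ρ²)/4)^{1-n} ρ^{n-2}`, so dominated
convergence applies. The substitution `ρ = √(t/(1-t))` turns `∫₀^∞ ρ^{2a-1} (1 + ρ²)^{-(a+b)} dρ`
into `B(a, b)/2`; with `a = (n-1)/2`, `b = (n+1)/2`, Legendre's duplication formula evaluates
the limit.
-/

open MeasureTheory Real Filter Set Topology

theorem ofReal_rpow_mul_one_sub_rpow {t : ℝ} (ht : t ∈ Icc (0:ℝ) 1) (a b : ℝ) :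
    ((t ^ (a - 1) * (1 - t) ^ (b - 1) : ℝ) : ℂ) =
      (t : ℂ) ^ ((a : ℂ) - 1) * (1 - (t : ℂ)) ^ ((b : ℂ) - 1) := by
  push_cast [Complex.ofReal_cpow ht.1, Complex.ofReal_cpow (sub_nonneg.2 ht.2)]
  rfl

noncomputable def sqrtOdds (t : ℝ) : ℝ := √(t / (1 - t))

theorem image_sqrtOdds_Ioo : sqrtOdds '' Ioo 0 1 = Ioi 0 := by
  ext x
  constructor
  · rintro ⟨t, ⟨ht0, ht1⟩, rfl⟩
    exact sqrt_pos.2 (div_pos ht0 (sub_pos.2 ht1))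
  · intro (hx : 0 < x)
    refine ⟨x ^ 2 / (1 + x ^ 2), ⟨by positivity, by rw [div_lt_one (by positivity)]; linarith⟩, ?_⟩
    have : x ^ 2 / (1 + x ^ 2) / (1 - x ^ 2 / (1 + x ^ 2)) = x ^ 2 := by
      field_simp; ring
    rw [sqrtOdds, this, sqrt_sq hx.le]

theorem injOn_sqrtOdds : InjOn sqrtOdds (Ioo 0 1) := by
  rintro s ⟨hs0, hs1⟩ t ⟨ht0, ht1⟩ hst
  have h1s : 0 < 1 - s := sub_pos.2 hs1
  have h1t : 0 < 1 - t := sub_pos.2 ht1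
  rw [sqrtOdds, sqrtOdds, sqrt_inj (by positivity) (by positivity), div_eq_div_iff h1s.ne' h1t.ne']
    at hst
  linarith

theorem hasDerivAt_sqrtOdds {t : ℝ} (ht : t ∈ Ioo (0:ℝ) 1) :
    HasDerivAt sqrtOdds (((1 - t) ^ 2)⁻¹ / (2 * sqrtOdds t)) t := by
  have h1t : 1 - t ≠ 0 := (sub_pos.2 ht.2).ne'
  have hodds : HasDerivAt (fun s => s / (1 - s)) (((1 - t) ^ 2)⁻¹) t :=
    ((hasDerivAt_id' t).fun_div ((hasDerivAt_const t 1).fun_sub (hasDerivAt_id' t)) h1t).congr_deriv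
      (by field_simp; ring)
  exact hodds.sqrt (div_pos ht.1 (sub_pos.2 ht.2)).ne'

section Beta
variable {a b : ℝ}

theorem intervalIntegrable_rpow_mul_one_sub_rpow (ha : 0 < a) (hb : 0 < b) :
    IntervalIntegrable (fun t => t ^ (a - 1) * (1 - t) ^ (b - 1)) volume 0 1 := by
  have h := Complex.betaIntegral_convergent (u := a) (v := b) (by simpa) (by simpa)
  rw [intervalIntegrable_iff_integrableOn_Icc_of_le zero_le_one] at h ⊢
  simpa [IntegrableOn] using (h.congr_fun (fun t ht => (ofReal_rpow_mul_one_sub_rpow ht a b).symm)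
    measurableSet_Icc).re

theorem integral_rpow_mul_one_sub_rpow (ha : 0 < a) (hb : 0 < b) :
    ∫ t in (0:ℝ)..1, t ^ (a - 1) * (1 - t) ^ (b - 1) = Gamma a * Gamma b / Gamma (a + b) := by
  have h := Complex.Gamma_mul_Gamma_eq_betaIntegral (s := a) (t := b) (by simpa) (by simpa)
  rw [Complex.betaIntegral, ← intervalIntegral.integral_congr (fun t ht =>
      ofReal_rpow_mul_one_sub_rpow (by rwa [uIcc_of_le zero_le_one] at ht) a b),
    intervalIntegral.integral_ofReal, ← Complex.ofReal_add] at h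
  simp only [Complex.Gamma_ofReal] at h
  norm_cast at h
  rw [h, mul_div_cancel_left₀ _ (Gamma_pos_of_pos (add_pos ha hb)).ne']

theorem abs_deriv_sqrtOdds_mul {t : ℝ} (ht : t ∈ Ioo (0:ℝ) 1) :
    |((1 - t) ^ 2)⁻¹ / (2 * sqrtOdds t)| *
        (sqrtOdds t ^ (2 * a - 1) * (1 + sqrtOdds t ^ 2) ^ (-(a + b))) =
      2⁻¹ * (t ^ (a - 1) * (1 - t) ^ (b - 1)) := by
  obtain ⟨ht0, ht1⟩ := ht
  have hu : 0 < 1 - t := sub_pos.2 ht1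
  have hroot : sqrtOdds t = t ^ (1 / 2 : ℝ) / (1 - t) ^ (1 / 2 : ℝ) := by
    rw [sqrtOdds, sqrt_eq_rpow, div_rpow ht0.le hu.le]
  have hpow : sqrtOdds t ^ (2 * a - 1) =
      t ^ ((2 * a - 1) / 2) / (1 - t) ^ ((2 * a - 1) / 2) := by
    rw [sqrtOdds, sqrt_eq_rpow, ← rpow_mul (div_pos ht0 hu).le, div_rpow ht0.le hu.le]
    ring_nf
  have hbracket : (1 + sqrtOdds t ^ 2) ^ (-(a + b)) = (1 - t) ^ (a + b) := by
    rw [sqrtOdds, sq_sqrt (div_pos ht0 hu).le, show 1 + t / (1 - t) = (1 - t)⁻¹ by field_simp; ring,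
      inv_rpow hu.le, rpow_neg hu.le, inv_inv]
  rw [hpow, hbracket, abs_of_pos (by rw [hroot]; positivity), hroot]
  generalize 1 - t = u at hu ⊢
  have ht_split : t ^ ((2 * a - 1) / 2) = t ^ (a - 1) * t ^ (1 / 2 : ℝ) := by
    rw [← rpow_add ht0]; ring_nf
  have hu_split : u ^ (1 / 2 : ℝ) * u ^ (a + b) = u ^ 2 * u ^ ((2 * a - 1) / 2) * u ^ (b - 1) := by
    rw [← rpow_add hu, ← rpow_natCast, ← rpow_add hu, ← rpow_add hu]; ring_nf
  rw [ht_split]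
  have : 0 < t ^ (1 / 2 : ℝ) := by positivity
  have : 0 < u ^ ((2 * a - 1) / 2) := by positivity
  field_simp
  exact hu_split

theorem integrableOn_Ioi_rpow_mul_one_add_sq_rpow (ha : 0 < a) (hb : 0 < b) :
    IntegrableOn (fun x : ℝ => x ^ (2 * a - 1) * (1 + x ^ 2) ^ (-(a + b))) (Ioi 0) := by
  rw [← image_sqrtOdds_Ioo, integrableOn_image_iff_integrableOn_abs_deriv_smul measurableSet_Ioo
    (fun t ht => (hasDerivAt_sqrtOdds ht).hasDerivWithinAt) injOn_sqrtOdds]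
  have hbeta := (intervalIntegrable_rpow_mul_one_sub_rpow ha hb).const_mul 2⁻¹
  rw [intervalIntegrable_iff_integrableOn_Ioo_of_le zero_le_one] at hbeta
  exact hbeta.congr_fun (fun t ht => (abs_deriv_sqrtOdds_mul ht).symm) measurableSet_Ioo

theorem integral_Ioi_rpow_mul_one_add_sq_rpow (ha : 0 < a) (hb : 0 < b) :
    ∫ x in Ioi (0 : ℝ), x ^ (2 * a - 1) * (1 + x ^ 2) ^ (-(a + b)) =
      Gamma a * Gamma b / (2 * Gamma (a + b)) := by
  rw [← image_sqrtOdds_Ioo, integral_image_eq_integral_abs_deriv_smul measurableSet_Ioo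
    (fun t ht => (hasDerivAt_sqrtOdds ht).hasDerivWithinAt) injOn_sqrtOdds,
    setIntegral_congr_fun measurableSet_Ioo
      (fun t ht => (smul_eq_mul _ _).trans (abs_deriv_sqrtOdds_mul ht)),
    integral_const_mul, ← integral_Ioc_eq_integral_Ioo,
    ← intervalIntegral.integral_of_le zero_le_one, integral_rpow_mul_one_sub_rpow ha hb]
  ring

end Beta

theorem pow_sub_two_eq_rpow {n : ℕ} (hn : 2 ≤ n) (ρ : ℝ) :
    ρ ^ (n - 2) = ρ ^ (2 * (((n : ℝ) - 1) / 2) - 1) := by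
  rw [← rpow_natCast, Nat.cast_sub hn]
  ring_nf

theorem integral_Ioi_one_add_sq_div_two_rpow_neg_mul_pow {n : ℕ} (hn : 2 ≤ n) :
    ∫ ρ in Ioi (0 : ℝ), ((1 + ρ ^ 2) / 2) ^ (-(n : ℝ)) * ρ ^ (n - 2) =
      √π * Gamma (((n : ℝ) - 1) / 2) / Gamma ((n : ℝ) / 2) := by
  have hn' : (2 : ℝ) ≤ n := by exact_mod_cast hn
  have hintegrand (ρ : ℝ) : ((1 + ρ ^ 2) / 2) ^ (-(n : ℝ)) * ρ ^ (n - 2) =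
      2 ^ (n : ℝ) * (ρ ^ (2 * (((n : ℝ) - 1) / 2) - 1) *
        (1 + ρ ^ 2) ^ (-(((n : ℝ) - 1) / 2 + ((n : ℝ) + 1) / 2))) := by
    rw [div_rpow (by positivity) zero_le_two, rpow_neg zero_le_two, div_inv_eq_mul,
      pow_sub_two_eq_rpow hn]
    ring_nf
  simp_rw [hintegrand]
  rw [integral_const_mul, integral_Ioi_rpow_mul_one_add_sq_rpow (by linarith) (by linarith),
    show ((n : ℝ) - 1) / 2 + ((n : ℝ) + 1) / 2 = n by ring]
  have hdup := Gamma_mul_Gamma_add_half ((n : ℝ) / 2)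
  rw [show 2 * ((n : ℝ) / 2) = n by ring, show (n : ℝ) / 2 + 1 / 2 = (n + 1) / 2 by ring] at hdup
  have hpow : (2 : ℝ) ^ (n : ℝ) * 2 ^ (1 - (n : ℝ)) = 2 := by
    rw [← rpow_add two_pos]; norm_num
  have hGhalf : Gamma ((n : ℝ) / 2) ≠ 0 := (Gamma_pos_of_pos (by positivity)).ne'
  have hGn : Gamma (n : ℝ) ≠ 0 := (Gamma_pos_of_pos (by positivity)).ne'
  field_simp
  linear_combination (2 ^ (n : ℝ) * Gamma (((n : ℝ) - 1) / 2)) * hdup +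
    (Gamma (((n : ℝ) - 1) / 2) * Gamma n * √π) * hpow

-- With `ε = e^{-2L}` and `s = (1 + ρ² + ε)/2` one has `t_L = e^L s`, `r_L = e^L √(s² - ε)` and
-- `z_L = e^L (s - 1)`; this is the integrand with the powers of `e^L` cancelled.
noncomputable def rescaledIntegrand (n : ℕ) (ε ρ : ℝ) : ℝ :=
  √(((1 + ρ ^ 2 + ε) / 2) ^ 2 - ε) ^ (1 - (n : ℝ)) *
    (1 - ((1 + ρ ^ 2 + ε) / 2 - 1) / √(((1 + ρ ^ 2 + ε) / 2) ^ 2 - ε)) * ρ ^ (n - 2)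

theorem integrand_eq_rescaledIntegrand (n : ℕ) (L ρ : ℝ) :
    exp (L * ((n : ℝ) - 1)) * √((cosh L + exp L * ρ ^ 2 / 2) ^ 2 - 1) ^ (1 - (n : ℝ)) *
        (1 - (cosh L + exp L * ρ ^ 2 / 2 - exp L) / √((cosh L + exp L * ρ ^ 2 / 2) ^ 2 - 1)) *
        ρ ^ (n - 2) =
      rescaledIntegrand n (exp (-(2 * L))) ρ := by
  set ε := exp (-(2 * L))
  set s := (1 + ρ ^ 2 + ε) / 2
  have hE := exp_pos L
  have hεE : ε * exp L ^ 2 = 1 := by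
    rw [← exp_nat_mul, ← exp_add]; norm_num
  have ht : cosh L + exp L * ρ ^ 2 / 2 = exp L * s := by
    rw [cosh_eq, show exp (-L) = ε * exp L by rw [← exp_add]; ring_nf]
    ring
  have hr : √((cosh L + exp L * ρ ^ 2 / 2) ^ 2 - 1) = exp L * √(s ^ 2 - ε) := by
    rw [ht, show (exp L * s) ^ 2 - 1 = exp L ^ 2 * (s ^ 2 - ε) by linear_combination hεE,
      sqrt_mul (by positivity), sqrt_sq hE.le]
  rw [rescaledIntegrand, hr, ht, mul_rpow hE.le (sqrt_nonneg _), ← exp_mul,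
    ← mul_sub_one, mul_div_mul_left _ _ hE.ne', ← mul_assoc, ← exp_add,
    show L * ((n : ℝ) - 1) + L * (1 - n) = 0 by ring, exp_zero, one_mul]

theorem rescaledIntegrand_zero (n : ℕ) (ρ : ℝ) :
    rescaledIntegrand n 0 ρ = ((1 + ρ ^ 2) / 2) ^ (-(n : ℝ)) * ρ ^ (n - 2) := by
  have hs : 0 < (1 + ρ ^ 2) / 2 := by positivity
  rw [rescaledIntegrand, add_zero, sub_zero, sqrt_sq hs.le,
    show 1 - ((1 + ρ ^ 2) / 2 - 1) / ((1 + ρ ^ 2) / 2) = ((1 + ρ ^ 2) / 2) ^ (-1 : ℝ) by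
      rw [rpow_neg_one]; field_simp; ring,
    ← rpow_add hs]
  ring_nf

theorem continuousAt_rescaledIntegrand (n : ℕ) (ρ : ℝ) :
    ContinuousAt (fun ε => rescaledIntegrand n ε ρ) 0 := by
  have hR : √(((1 + ρ ^ 2 + 0) / 2) ^ 2 - 0) ≠ 0 := by
    rw [add_zero, sub_zero, sqrt_sq (by positivity)]
    positivity
  have hR_cont : ContinuousAt (fun ε : ℝ => √(((1 + ρ ^ 2 + ε) / 2) ^ 2 - ε)) 0 := by fun_prop
  have hs_cont : ContinuousAt (fun ε : ℝ => (1 + ρ ^ 2 + ε) / 2 - 1) 0 := by fun_prop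
  exact ((hR_cont.rpow_const (Or.inl hR)).mul
    (continuousAt_const.sub (hs_cont.div hR_cont hR))).mul continuousAt_const

theorem norm_rescaledIntegrand_le {n : ℕ} (hn : 1 ≤ n) {ε ρ : ℝ} (hε₀ : 0 ≤ ε) (hε : ε ≤ 1 / 2)
    (hρ : 0 ≤ ρ) :
    ‖rescaledIntegrand n ε ρ‖ ≤ 2 * ((1 + ρ ^ 2) / 4) ^ (1 - (n : ℝ)) * ρ ^ (n - 2) := by
  rw [rescaledIntegrand]
  set s := (1 + ρ ^ 2 + ε) / 2 with hs
  have hsε : s ^ 2 - ε = (s - ε) ^ 2 + ε * ρ ^ 2 := by rw [hs]; ring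
  have hs1 : s ^ 2 - ε = (s - 1) ^ 2 + ρ ^ 2 := by rw [hs]; ring
  have hs_lower : (1 + ρ ^ 2) / 4 ≤ s - ε := by rw [hs]; nlinarith [sq_nonneg ρ]
  set R := √(s ^ 2 - ε)
  have hR_lower : (1 + ρ ^ 2) / 4 ≤ R := by
    refine le_sqrt_of_sq_le ?_
    rw [hsε]
    nlinarith [pow_le_pow_left₀ (by positivity) hs_lower 2, mul_nonneg hε₀ (sq_nonneg ρ)]
  have hR : 0 < R := lt_of_lt_of_le (by positivity) hR_lower
  have hfactor : |1 - (s - 1) / R| ≤ 2 := by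
    have : |(s - 1) / R| ≤ 1 := by
      rw [abs_div, abs_of_pos hR, div_le_one hR]
      exact abs_le_sqrt (by rw [hs1]; nlinarith)
    calc |1 - (s - 1) / R| ≤ |1| + |(s - 1) / R| := abs_sub _ _
      _ ≤ 2 := by rw [abs_one]; linarith
  have hpow : R ^ (1 - (n : ℝ)) ≤ ((1 + ρ ^ 2) / 4) ^ (1 - (n : ℝ)) :=
    rpow_le_rpow_of_nonpos (by positivity) hR_lower (by simp [hn])
  rw [norm_mul, norm_mul, norm_of_nonneg (by positivity : 0 ≤ R ^ (1 - (n : ℝ))),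
    norm_of_nonneg (by positivity : 0 ≤ ρ ^ (n - 2)), Real.norm_eq_abs]
  calc R ^ (1 - (n : ℝ)) * |1 - (s - 1) / R| * ρ ^ (n - 2)
      ≤ ((1 + ρ ^ 2) / 4) ^ (1 - (n : ℝ)) * 2 * ρ ^ (n - 2) := by gcongr
    _ = 2 * ((1 + ρ ^ 2) / 4) ^ (1 - (n : ℝ)) * ρ ^ (n - 2) := by ring

theorem integrableOn_Ioi_rescaledIntegrand_bound {n : ℕ} (hn : 2 ≤ n) :
    IntegrableOn (fun ρ : ℝ => 2 * ((1 + ρ ^ 2) / 4) ^ (1 - (n : ℝ)) * ρ ^ (n - 2)) (Ioi 0) := by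
  have ha : 0 < ((n : ℝ) - 1) / 2 := by
    have : (2 : ℝ) ≤ n := by exact_mod_cast hn
    linarith
  refine IntegrableOn.congr_fun ((integrableOn_Ioi_rpow_mul_one_add_sq_rpow ha ha).const_mul
    (2 * 4 ^ ((n : ℝ) - 1))) (fun ρ _ => ?_) measurableSet_Ioi
  rw [pow_sub_two_eq_rpow hn, div_rpow (by positivity) (by norm_num),
    show (1 : ℝ) - n = -((n : ℝ) - 1) by ring, rpow_neg (by norm_num : (0 : ℝ) ≤ 4),
    div_inv_eq_mul]
  ring_nf

theorem tendsto_integral_rescaledIntegrand {n : ℕ} (hn : 2 ≤ n) :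
    Tendsto (fun ε => ∫ ρ in Ioi 0, rescaledIntegrand n ε ρ) (𝓝[>] 0)
      (𝓝 (∫ ρ in Ioi 0, rescaledIntegrand n 0 ρ)) := by
  refine tendsto_integral_filter_of_dominated_convergence _ ?_ ?_
    (integrableOn_Ioi_rescaledIntegrand_bound hn) ?_
  · refine Eventually.of_forall fun ε => Measurable.aestronglyMeasurable ?_
    unfold rescaledIntegrand
    fun_prop
  · filter_upwards [Ioo_mem_nhdsGT (by norm_num : (0 : ℝ) < 1 / 2)] with ε hε
    filter_upwards [ae_restrict_mem measurableSet_Ioi] with ρ hρ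
    exact norm_rescaledIntegrand_le (by omega) hε.1.le hε.2.le (le_of_lt hρ)
  · exact ae_of_all _ fun ρ =>
      (continuousAt_rescaledIntegrand n ρ).tendsto.mono_left nhdsWithin_le_nhds

/-- AdS Schwarzschild horosphere limit: with `t_L(ρ) = cosh L + e^L ρ²/2`,
`r_L(ρ) = √(t_L(ρ)² − 1)` and `z_L(ρ) = t_L(ρ) − e^L`,
`∫₀^∞ e^{L(n−1)} r_L^{1−n} (1 − z_L/r_L) ρ^{n−2} dρ → √π Γ((n−1)/2)/Γ(n/2)` as `L → ∞`. -/
theorem stmt_14 (n : ℕ) (hn : 3 ≤ n) :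
    Tendsto (fun L : ℝ =>
      ∫ ρ in Set.Ioi (0:ℝ),
        Real.exp (L * ((n : ℝ) - 1)) *
          Real.sqrt ((Real.cosh L + Real.exp L * ρ ^ 2 / 2) ^ 2 - 1) ^ (1 - (n : ℝ)) *
          (1 - (Real.cosh L + Real.exp L * ρ ^ 2 / 2 - Real.exp L) /
              Real.sqrt ((Real.cosh L + Real.exp L * ρ ^ 2 / 2) ^ 2 - 1)) *
          ρ ^ (n - 2))
      atTop
      (nhds (Real.sqrt Real.pi * Real.Gamma (((n : ℝ) - 1) / 2) / Real.Gamma ((n : ℝ) / 2))) := by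
  have hn₂ : 2 ≤ n := by omega
  have hε : Tendsto (fun L : ℝ => exp (-(2 * L))) atTop (𝓝[>] 0) :=
    tendsto_exp_atBot_nhdsGT.comp
      (tendsto_neg_atTop_atBot.comp (tendsto_id.const_mul_atTop two_pos))
  simp_rw [integrand_eq_rescaledIntegrand]
  rw [← integral_Ioi_one_add_sq_div_two_rpow_neg_mul_pow hn₂]
  simp_rw [← rescaledIntegrand_zero]
  exact (tendsto_integral_rescaledIntegrand hn₂).comp hε
end
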